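/- Let G be a group satisfying the 5-Engel identity [x,y,y,y,y,y] = 1 for all x, y ∈ G. Then for all x, y, z_1, z_2, z_3, z_4, z_5 ∈ G and any fixed enumeration of the symmetric group Sym(5), the product over all σ ∈ Sym(5) of the left-normed commutators [x, z_{σ(1)}, y, z_{σ(2)}, z_{σ(3)}, z_{σ(4)}, z_{σ(5)}] (taken in the order of that enumeration) lies in γ_8(G). -/

import Mathlib

def gc {G : Type*} [Group G] (a b : G) : G := a⁻¹ * b⁻¹ * a * b

/-!
Mathlib's `lowerCentralSeries n` is `γ_{n+1}`. We pass to `Q = G ⧸ γ₈`, where the product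
should be `1`.

In `Q` every commutator of weight 7 is central, and the error terms in the expansion of
`[x, w₀, y, w₁, …, w₄]` at a product `wᵢ = a * b` have weight at least 8 (by the three-subgroup
bound `⁅γᵢ, γⱼ⁆ ≤ γᵢ₊ⱼ`), so this commutator is multiplicative in each `wᵢ`. Expanding the Engel
identity `[x * y, v, v, v, v, v] = 1` in the same way leaves only the cross term, so
`[x, v, y, v, v, v, v] = 1` for all `v`. Finally, a function multiplicative in each of `n`
arguments that is trivial on the diagonal has trivial symmetrization: evaluating the diagonal
at `∏_{i ∈ S} zᵢ` for every `S` and applying inclusion–exclusion over `S` isolates the product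
over the surjective, i.e. bijective, index maps.
-/

open scoped commutatorElement IsMulCommutative
open Finset Fintype Function

theorem List.ofFn_update {α : Type*} {n : ℕ} (f : Fin n → α) (i : Fin n) (a : α) :
    List.ofFn (update f i a) = (List.ofFn f).set i a := by
  refine List.ext_getElem (by simp) fun m h _ => ?_
  rw [List.getElem_ofFn, List.getElem_set, update_apply]
  simp only [Fin.ext_iff, eq_comm, List.getElem_ofFn]

theorem Finset.prod_perm_eq_one_of_forall_prod_piFinset_eq_one {α C : Type*} [Fintype α]
    [DecidableEq α] [CommGroup C] (q : (α → α) → C)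
    (hq : ∀ S : Finset α, ∏ p ∈ piFinset fun _ => S, q p = 1) :
    ∏ σ : Equiv.Perm α, q σ = 1 := by
  have hIE := inclusion_exclusion_sum_inf_compl (G := Additive C) univ
    (fun j => {p : α → α | ∀ i, p i ≠ j}) (fun p => Additive.ofMul (q p))
  have hperm : (univ.inf fun j => ({p : α → α | ∀ i, p i ≠ j} : Finset _)ᶜ) =
      univ.map ⟨_, DFunLike.coe_injective (F := Equiv.Perm α)⟩ := by
    ext p
    simp only [Finset.mem_inf, mem_compl, mem_filter, mem_univ, true_and, not_forall, not_not,
      forall_const, mem_map, Embedding.coeFn_mk]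
    refine ⟨fun h => ⟨Equiv.ofBijective p ⟨Finite.injective_iff_surjective.2 h, h⟩, rfl⟩, ?_⟩
    rintro ⟨σ, rfl⟩
    exact σ.surjective
  have hmiss : ∀ t : Finset α, t.inf (fun j => ({p : α → α | ∀ i, p i ≠ j} : Finset _)) =
      piFinset fun _ => tᶜ := by
    intro t; ext p
    simp only [Finset.mem_inf, mem_filter, mem_univ, true_and, mem_piFinset, mem_compl]
    exact ⟨fun h a ha => h _ ha a rfl, fun h i hi a hai => h a (hai ▸ hi)⟩
  simp only [hperm, hmiss, sum_map, ← ofMul_prod, hq, ofMul_one, smul_zero, sum_const_zero,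
    ofMul_eq_zero] at hIE
  exact hIE

theorem apply_const_prod_eq_prod_piFinset {H C : Type*} [Group H] [CommGroup C] {n : ℕ}
    (f : (Fin n → H) → C)
    (hf : ∀ v i a b, f (update v i (a * b)) = f (update v i a) * f (update v i b))
    {ι : Type*} (S : Finset ι) (z : ι → H) :
    f (fun _ => (S.toList.map z).prod) = ∏ p ∈ piFinset fun _ => S, f (z ∘ p) := by
  induction n with
  | zero =>
    rw [piFinset_of_isEmpty, univ_unique, prod_singleton]
    exact congrArg f (Subsingleton.elim _ _)
  | succ n ih =>
    let slot (v : Fin n → H) : H →* C := MonoidHom.mk' (fun a => f (Fin.cons a v)) fun a b => by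
      simpa only [Fin.update_cons_zero] using hf (Fin.cons 1 v) 0 a b
    have hpi : (piFinset fun _ : Fin (n + 1) => S) =
        (S ×ˢ piFinset fun _ : Fin n => S).map (Fin.consEquiv fun _ => ι).toEmbedding := by
      have := filter_piFinset_eq_map_consEquiv (fun _ : Fin (n + 1) => S) fun _ => True
      simp only [filter_true] at this
      exact this
    calc f (fun _ => (S.toList.map z).prod)
        = slot (fun _ => (S.toList.map z).prod) (S.toList.map z).prod := by
          rw [← Fin.cons_self_tail (fun _ => _)]; rfl
      _ = ∏ j ∈ S, f (Fin.cons (z j) fun _ => (S.toList.map z).prod) := by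
          rw [map_list_prod, List.map_map, prod_map_toList]; rfl
      _ = ∏ j ∈ S, ∏ q ∈ piFinset fun _ => S, f (Fin.cons (z j) (z ∘ q)) := by
          refine prod_congr rfl fun j _ => ih (fun v => f (Fin.cons (z j) v)) fun v i a b => ?_
          simpa only [Fin.cons_update] using hf (Fin.cons (z j) v) i.succ a b
      _ = ∏ p ∈ piFinset fun _ => S, f (z ∘ p) := by
          rw [hpi, prod_map, prod_product]
          simp [Fin.consEquiv, Fin.comp_cons]

theorem prod_comp_perm_eq_one_of_apply_const_eq_one {H C : Type*} [Group H] [CommGroup C]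
    {n : ℕ} (f : (Fin n → H) → C)
    (hf : ∀ v i a b, f (update v i (a * b)) = f (update v i a) * f (update v i b))
    (hconst : ∀ w, f (fun _ => w) = 1) (z : Fin n → H) :
    ∏ σ : Equiv.Perm (Fin n), f (z ∘ σ) = 1 :=
  prod_perm_eq_one_of_forall_prod_piFinset_eq_one (fun p => f (z ∘ p)) fun S => by
    rw [← apply_const_prod_eq_prod_piFinset f hf S z, hconst]

section Commutators

variable {G K : Type*} [Group G] [Group K]

local notation "γ" => Subgroup.lowerCentralSeries (⊤ : Subgroup G)

theorem Subgroup.map_top_lowerCentralSeries {f : G →* K}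
    (hf : Surjective f) (n : ℕ) :
    (γ n).map f = (⊤ : Subgroup K).lowerCentralSeries n := by
  rw [Subgroup.map_lowerCentralSeries, Subgroup.map_top_of_surjective f hf]

theorem Subgroup.lowerCentralSeries_quotient_eq_bot (n : ℕ) :
    (⊤ : Subgroup (G ⧸ γ n)).lowerCentralSeries n = ⊥ := by
  rw [← Subgroup.map_top_lowerCentralSeries (QuotientGroup.mk'_surjective _),
    Subgroup.map_eq_bot_iff, QuotientGroup.ker_mk']

theorem Subgroup.commutator_lowerCentralSeries_le (i j : ℕ) : ⁅γ i, γ j⁆ ≤ γ (i + j + 1) := by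
  induction j generalizing G i with
  | zero => rfl
  | succ j ih =>
    set N := (⊤ : Subgroup G).lowerCentralSeries (i + j + 2)
    have hπ := QuotientGroup.mk'_surjective N
    show _ ≤ N
    rw [← QuotientGroup.ker_mk' N, ← Subgroup.map_eq_bot_iff,
      Subgroup.map_commutator, map_top_lowerCentralSeries hπ, map_top_lowerCentralSeries hπ,
      lowerCentralSeries_succ, commutator_comm]
    have hQ := lowerCentralSeries_quotient_eq_bot (G := G) (i + j + 2)
    apply commutator_commutator_eq_bot_of_rotate
    · rw [commutator_comm ⊤, ← lowerCentralSeries_succ, eq_bot_iff, ← hQ]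
      exact (ih (i + 1)).trans (lowerCentralSeries_antitone _ (by omega))
    · rw [eq_bot_iff, ← hQ]
      exact commutator_mono (ih i) le_top

theorem gc_eq_commutatorElement_inv (a b : G) : gc a b = ⁅a⁻¹, b⁻¹⁆ := by
  simp [gc, commutatorElement_def]

theorem gc_mem_lowerCentralSeries {a b : G} {i j : ℕ} (ha : a ∈ γ i) (hb : b ∈ γ j) :
    gc a b ∈ γ (i + j + 1) := by
  rw [gc_eq_commutatorElement_inv]
  exact Subgroup.commutator_lowerCentralSeries_le i j
    (Subgroup.commutator_mem_commutator (inv_mem ha) (inv_mem hb))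

theorem gc_mem_lowerCentralSeries_succ {a : G} {i : ℕ} (ha : a ∈ γ i) (b : G) :
    gc a b ∈ γ (i + 1) := by
  rw [gc_eq_commutatorElement_inv]
  exact Subgroup.commutator_mem_commutator (inv_mem ha) (Subgroup.mem_top _)

theorem mem_center_of_mem_lowerCentralSeries {n : ℕ} (hn : γ n = ⊥) {a : G} {i : ℕ}
    (ha : a ∈ γ i) (hle : n ≤ i + 1) : a ∈ Subgroup.center G := by
  refine Subgroup.mem_center_iff.2 fun g => ?_
  have := Subgroup.lowerCentralSeries_antitone _ hle
    (Subgroup.commutator_mem_commutator ha (Subgroup.mem_top g))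
  rw [hn, Subgroup.mem_bot, commutatorElement_eq_one_iff_mul_comm] at this
  exact this.symm

def leftNormedComm (g : G) (L : List G) : G := L.foldl gc g

@[simp] theorem leftNormedComm_cons (g c : G) (L : List G) :
    leftNormedComm g (c :: L) = leftNormedComm (gc g c) L := rfl

theorem leftNormedComm_append (g : G) (L₁ L₂ : List G) :
    leftNormedComm g (L₁ ++ L₂) = leftNormedComm (leftNormedComm g L₁) L₂ :=
  List.foldl_append

theorem gc_mul_left (a b c : G) : gc (a * b) c = gc a c * gc (gc a c) b * gc b c := by
  simp only [gc]; group

theorem gc_mul_right (a b c : G) : gc a (b * c) = gc a c * gc a b * gc (gc a b) c := by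
  simp only [gc]; group

theorem leftNormedComm_mem_lowerCentralSeries {g : G} {i : ℕ} (hg : g ∈ γ i) (L : List G) :
    leftNormedComm g L ∈ γ (i + L.length) := by
  induction L generalizing g i with
  | nil => exact hg
  | cons c L ih =>
    rw [leftNormedComm_cons, List.length_cons, ← add_assoc, add_right_comm]
    exact ih (gc_mem_lowerCentralSeries_succ hg c)

theorem leftNormedComm_eq_one {n : ℕ} (hn : γ n = ⊥) {g : G} {i : ℕ} (hg : g ∈ γ i)
    (L : List G) (hle : n ≤ i + L.length) : leftNormedComm g L = 1 := by
  have := Subgroup.lowerCentralSeries_antitone _ hle (leftNormedComm_mem_lowerCentralSeries hg L)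
  rwa [hn, Subgroup.mem_bot] at this

theorem leftNormedComm_mul {n : ℕ} (hn : γ n = ⊥) (L : List G) {a b : G} {i j : ℕ}
    (ha : a ∈ γ i) (hb : b ∈ γ j) (hle : n ≤ i + j + L.length + 1) :
    leftNormedComm (a * b) L = leftNormedComm a L * leftNormedComm b L := by
  induction L generalizing a b i j with
  | nil => rfl
  | cons c L ih =>
    simp only [List.length_cons] at hle
    have hac := gc_mem_lowerCentralSeries_succ ha c
    have hbc := gc_mem_lowerCentralSeries_succ hb c
    have hacb := gc_mem_lowerCentralSeries hac hb
    have hacb' := Subgroup.lowerCentralSeries_antitone _ (by omega : j + 1 ≤ i + 1 + j + 1) hacb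
    rw [leftNormedComm_cons, gc_mul_left, mul_assoc, ih hac (mul_mem hacb' hbc) (by omega),
      ih hacb hbc (by omega), leftNormedComm_eq_one hn hacb L (by omega), one_mul]
    rfl

theorem leftNormedComm_mul_cons {n : ℕ} (hn : γ n = ⊥) (c : G) (L : List G) {a b : G}
    {i j : ℕ} (ha : a ∈ γ i) (hb : b ∈ γ j) (hle : n ≤ i + j + L.length + 3) :
    leftNormedComm (a * b) (c :: L) =
      leftNormedComm a (c :: L) * leftNormedComm a (c :: b :: L) * leftNormedComm b (c :: L) := by
  have hac := gc_mem_lowerCentralSeries_succ ha c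
  have hbc := gc_mem_lowerCentralSeries_succ hb c
  have hacb := gc_mem_lowerCentralSeries hac hb
  simp only [leftNormedComm_cons]
  rw [gc_mul_left, leftNormedComm_mul hn L (mul_mem hac
      (Subgroup.lowerCentralSeries_antitone _ (by omega : i + 1 ≤ i + 1 + j + 1) hacb)) hbc
      (by omega), leftNormedComm_mul hn L hac hacb (by omega)]

theorem leftNormedComm_gc_mul {n : ℕ} (hn : γ n = ⊥) {A : G} {m : ℕ} (hA : A ∈ γ m)
    (L : List G) (hle : n ≤ m + L.length + 2) (a b : G) :
    leftNormedComm (gc A (a * b)) L = leftNormedComm (gc A a) L * leftNormedComm (gc A b) L := by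
  have ha := gc_mem_lowerCentralSeries_succ hA a
  have hb := gc_mem_lowerCentralSeries_succ hA b
  have hab := gc_mem_lowerCentralSeries_succ ha b
  rw [gc_mul_right, leftNormedComm_mul hn L (mul_mem hb ha) hab (by omega),
    leftNormedComm_mul hn L hb ha (by omega), leftNormedComm_eq_one hn hab L (by omega), mul_one]
  exact Subgroup.mem_center_iff.1
    (mem_center_of_mem_lowerCentralSeries hn (leftNormedComm_mem_lowerCentralSeries ha L)
      (by omega)) _

theorem leftNormedComm_set_mul {L : List G} (hL : γ (L.length + 1) = ⊥) (g : G) {k : ℕ}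
    (hk : k < L.length) (a b : G) : leftNormedComm g (L.set k (a * b)) =
      leftNormedComm g (L.set k a) * leftNormedComm g (L.set k b) := by
  simp only [List.set_eq_take_append_cons_drop, if_pos hk, leftNormedComm_append,
    leftNormedComm_cons]
  refine leftNormedComm_gc_mul hL (leftNormedComm_mem_lowerCentralSeries (i := 0) trivial _) _
    ?_ a b
  simp only [List.length_take, List.length_drop]
  omega

def linearizedEngelComm (x y : G) {k : ℕ} (w : Fin (k + 1) → G) : G :=
  leftNormedComm x (w 0 :: y :: List.ofFn (Fin.tail w))

variable {k : ℕ}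

theorem linearizedEngelComm_update_mul (hk : γ (k + 3) = ⊥) (x y : G) (w : Fin (k + 1) → G)
    (i : Fin (k + 1)) (a b : G) :
    linearizedEngelComm x y (update w i (a * b)) =
      linearizedEngelComm x y (update w i a) * linearizedEngelComm x y (update w i b) := by
  have hlist : ∃ m < k + 2, ∀ c, update w i c 0 :: y :: List.ofFn (Fin.tail (update w i c)) =
      (w 0 :: y :: List.ofFn (Fin.tail w)).set m c := by
    cases i using Fin.cases with
    | zero => exact ⟨0, by omega, fun c => by simp [Fin.tail_update_zero]⟩
    | succ j =>
      exact ⟨j + 2, by omega, fun c => by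
        simp [Fin.tail_update_succ, List.ofFn_update, update_of_ne (Fin.succ_ne_zero j).symm]⟩
  obtain ⟨m, hm, hlist⟩ := hlist
  simp only [linearizedEngelComm, hlist]
  exact leftNormedComm_set_mul (by simpa using hk) x (by simp; omega) a b

theorem linearizedEngelComm_mem_center (hk : γ (k + 3) = ⊥) (x y : G) (w : Fin (k + 1) → G) :
    linearizedEngelComm x y w ∈ Subgroup.center G :=
  mem_center_of_mem_lowerCentralSeries hk
    (leftNormedComm_mem_lowerCentralSeries (i := 0) trivial _) (by simp)

theorem linearizedEngelComm_const (hk : γ (k + 3) = ⊥)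
    (hE : ∀ a b : G, leftNormedComm a (List.replicate (k + 1) b) = 1) (x y v : G) :
    linearizedEngelComm x y (fun _ : Fin (k + 1) => v) = 1 := by
  have h := hE (x * y) v
  rw [List.replicate_succ, leftNormedComm_mul_cons hk v _ (i := 0) (j := 0) trivial trivial
    (by simp), ← List.replicate_succ, hE, hE, one_mul, mul_one, ← List.ofFn_const] at h
  exact h

theorem map_gc (f : G →* K) (a b : G) : f (gc a b) = gc (f a) (f b) := by
  simp [gc]

theorem map_leftNormedComm (f : G →* K) (g : G) (L : List G) :
    f (leftNormedComm g L) = leftNormedComm (f g) (L.map f) := by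
  induction L generalizing g with
  | nil => rfl
  | cons c L ih => simp [ih, map_gc]

theorem map_linearizedEngelComm (f : G →* K) (x y : G) {k : ℕ} (w : Fin (k + 1) → G) :
    f (linearizedEngelComm x y w) = linearizedEngelComm (f x) (f y) (f ∘ w) := by
  simp only [linearizedEngelComm, map_leftNormedComm, List.map_cons, List.map_ofFn]
  rfl

theorem prod_perm_linearizedEngelComm_eq_one (hk : γ (k + 3) = ⊥)
    (hE : ∀ a b : G, leftNormedComm a (List.replicate (k + 1) b) = 1) (x y : G)
    (z : Fin (k + 1) → G) :
    ∏ σ : Equiv.Perm (Fin (k + 1)),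
      (⟨linearizedEngelComm x y (z ∘ ⇑σ), linearizedEngelComm_mem_center hk x y _⟩ :
        Subgroup.center G) = 1 :=
  prod_comp_perm_eq_one_of_apply_const_eq_one
    (fun w => ⟨linearizedEngelComm x y w, linearizedEngelComm_mem_center hk x y w⟩)
    (fun v i a b => Subtype.ext (linearizedEngelComm_update_mul hk x y v i a b))
    (fun w => Subtype.ext (linearizedEngelComm_const hk hE x y w)) z

theorem list_prod_linearizedEngelComm_mem_lowerCentralSeries
    (hE : ∀ a b : G, leftNormedComm a (List.replicate (k + 1) b) = 1) (x y : G)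
    (z : Fin (k + 1) → G) (l : List (Equiv.Perm (Fin (k + 1)))) (hnd : l.Nodup)
    (hall : ∀ σ, σ ∈ l) :
    (l.map fun σ : Equiv.Perm (Fin (k + 1)) => linearizedEngelComm x y (z ∘ ⇑σ)).prod ∈
      γ (k + 3) := by
  set π := QuotientGroup.mk' (γ (k + 3))
  have hπ : Surjective π := QuotientGroup.mk'_surjective _
  have hEπ : ∀ a b : G ⧸ γ (k + 3), leftNormedComm a (List.replicate (k + 1) b) = 1 := by
    intro a b
    obtain ⟨a, rfl⟩ := hπ a
    obtain ⟨b, rfl⟩ := hπ b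
    rw [← List.map_replicate, ← map_leftNormedComm, hE, map_one]
  have hl : l.toFinset = univ := eq_univ_of_forall fun σ => List.mem_toFinset.2 (hall σ)
  rw [← QuotientGroup.eq_one_iff, ← QuotientGroup.mk'_apply, map_list_prod, List.map_map]
  have := prod_perm_linearizedEngelComm_eq_one
    (Subgroup.lowerCentralSeries_quotient_eq_bot (k + 3)) hEπ (π x) (π y) (π ∘ z)
  rw [← hl, List.prod_toFinset _ hnd] at this
  replace this := congrArg Subtype.val this
  rw [Subgroup.val_list_prod, List.map_map, OneMemClass.coe_one] at this
  refine Eq.trans ?_ this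
  exact congrArg List.prod (List.map_congr_left fun σ _ => map_linearizedEngelComm π x y (z ∘ σ))

end Commutators

/-- In a 5-Engel group `G`, for any enumeration (a list containing every permutation
exactly once) of `Sym(5)`, the product of the left-normed commutators
`[x, z_{σ(1)}, y, z_{σ(2)}, z_{σ(3)}, z_{σ(4)}, z_{σ(5)}]` over that enumeration
lies in `γ₈(G)`. -/
theorem fiveEngel_linearized_product_mem_gamma8
    (G : Type*) [Group G]
    (h5 : ∀ x y : G, gc (gc (gc (gc (gc x y) y) y) y) y = 1)
    (x y : G) (z : Fin 5 → G)
    (l : List (Equiv.Perm (Fin 5))) (hnd : l.Nodup) (hall : ∀ σ, σ ∈ l) :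
    (l.map fun σ =>
      gc (gc (gc (gc (gc (gc x (z (σ 0))) y) (z (σ 1))) (z (σ 2))) (z (σ 3))) (z (σ 4))).prod
      ∈ (⊤ : Subgroup G).lowerCentralSeries 7 :=
  list_prod_linearizedEngelComm_mem_lowerCentralSeries (k := 4) h5 x y z l hnd hall
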